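/- Let V_n, V ∈ H₊^{−m} with V_n → V in H₊^{−m}. Then the associated forms satisfy: for every u ∈ H₊^m, |t₊^{(n)}[u] − t₊[u]| ≤ a_n ‖u‖²_{L²} + b_n Re t₊[u], where a_n, b_n ≥ 0 and a_n, b_n → 0 as n → ∞. -/

import Mathlib

/-!
The difference of the two forms is the pairing `⟨(Vₙ - V) * u, u⟩`, and the convolution lemma
bounds it by `C_m ‖Vₙ - V‖_{-m} ‖u‖_m²`: writing `⟨2(k - j)⟩^m ≤ 2^m (⟨2j⟩^m + ⟨2k⟩^m)` moves the
weight of `Vₙ - V` onto one of the two factors of `u`, and the resulting `ℓ² × ℓ² × ℓ¹` double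
series is estimated by Cauchy–Schwarz, with `‖u‖_{ℓ¹} ≤ C ‖u‖_m` because `∑ ⟨2k⟩^{-2m} < ∞` for
`m ≥ 1`. It remains to control `‖u‖_m²` by the form, which is a Gårding inequality
`‖u‖_m² ≤ 2 Re t₊[u] + K ‖u‖²_{L²}`: split `V` into a finitely supported part, whose pairing is at
most its `ℓ¹` norm times `‖u‖²_{L²}`, and a tail so small in `H₊^{-m}` that its pairing is at most
`‖u‖_m² / 2`.
-/

noncomputable section
open Complex Filter

def wtp (s : ℝ) (k : ℤ) : ℝ := ((1 + |(2 * k : ℤ)| : ℝ)) ^ (2 * s)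

def conv (a b : ℤ → ℂ) (k : ℤ) : ℂ := ∑' j : ℤ, a (k - j) * b j

/-- `H₊^{-m}` norm of a coefficient sequence. -/
def hmnorm (m : ℕ) (a : ℤ → ℂ) : ℝ :=
  (∑' k : ℤ, wtp (-(m : ℝ)) k * ‖a k‖ ^ 2) ^ ((1 : ℝ) / 2)

/-- The quadratic form `t₊[u] = ⟨D₊^{2m}u,u⟩₊ + ⟨Wu,u⟩₊`. -/
def tform (m : ℕ) (W u : ℤ → ℂ) : ℂ :=
  (∑' k : ℤ, ((2 * Real.pi * (k : ℝ)) ^ (2 * m) * ‖u k‖ ^ 2 : ℝ)) +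
    ∑' k : ℤ, conv W u k * (starRingEnd ℂ) (u k)

open ComplexConjugate

namespace HPlus

def bracket (k : ℤ) : ℝ := 1 + |(2 * k : ℤ)|

lemma wtp_eq_rpow (s : ℝ) (k : ℤ) : wtp s k = bracket k ^ (2 * s) := rfl

lemma bracket_eq (k : ℤ) : bracket k = 1 + 2 * |(k : ℝ)| := by
  simp [bracket, abs_mul]

lemma one_le_bracket (k : ℤ) : 1 ≤ bracket k := by
  rw [bracket_eq]; linarith [abs_nonneg (k : ℝ)]

lemma bracket_pos (k : ℤ) : 0 < bracket k := one_pos.trans_le (one_le_bracket k)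

lemma bracket_sub_le (k j : ℤ) : bracket (k - j) ≤ bracket j + bracket k := by
  rw [bracket_eq, bracket_eq, bracket_eq, Int.cast_sub]
  linarith [abs_sub (k : ℝ) j, abs_nonneg (j : ℝ), abs_nonneg (k : ℝ)]

lemma bracket_pow_sub_le (m : ℕ) (k j : ℤ) :
    bracket (k - j) ^ m ≤ 2 ^ m * (bracket j ^ m + bracket k ^ m) :=
  calc bracket (k - j) ^ m ≤ (bracket j + bracket k) ^ m :=
        pow_le_pow_left₀ (bracket_pos _).le (bracket_sub_le k j) m
    _ ≤ 2 ^ (m - 1) * (bracket j ^ m + bracket k ^ m) :=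
        add_pow_le (bracket_pos j).le (bracket_pos k).le m
    _ ≤ 2 ^ m * (bracket j ^ m + bracket k ^ m) :=
        mul_le_mul_of_nonneg_right (pow_le_pow_right₀ one_le_two (Nat.sub_le m 1))
          (add_nonneg (pow_nonneg (bracket_pos j).le m) (pow_nonneg (bracket_pos k).le m))

lemma wtp_nonneg (s : ℝ) (k : ℤ) : 0 ≤ wtp s k := Real.rpow_nonneg (bracket_pos k).le _

lemma sq_bracket_pow (m : ℕ) (k : ℤ) : (bracket k ^ m) ^ 2 = wtp m k := by
  rw [wtp_eq_rpow, ← pow_mul, mul_comm, show (2 * m : ℝ) = ((2 * m : ℕ) : ℝ) by push_cast; ring,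
    Real.rpow_natCast]

lemma sq_inv_bracket_pow (m : ℕ) (k : ℤ) : ((bracket k ^ m)⁻¹) ^ 2 = wtp (-m) k := by
  rw [inv_pow, sq_bracket_pow, wtp_eq_rpow, wtp_eq_rpow, mul_neg,
    Real.rpow_neg (bracket_pos k).le]

lemma summable_wtp_neg {m : ℕ} (hm : 1 ≤ m) : Summable (wtp (-m)) := by
  refine Summable.of_norm_bounded_eventually
    (Real.summable_abs_int_rpow (b := 2 * m) (by norm_cast; omega)) ?_
  filter_upwards [eventually_cofinite_ne 0] with k hk
  have hk' : 0 < |(k : ℝ)| := abs_pos.mpr (Int.cast_ne_zero.mpr hk)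
  rw [Real.norm_of_nonneg (wtp_nonneg _ _), wtp_eq_rpow, mul_neg]
  exact Real.rpow_le_rpow_of_nonpos hk' (by rw [bracket_eq]; linarith)
    (neg_nonpos.mpr (by positivity))

lemma two_pi_mul_pow_le (m : ℕ) (k : ℤ) :
    (2 * Real.pi * k) ^ (2 * m) ≤ Real.pi ^ (2 * m) * wtp m k := by
  rw [← sq_bracket_pow, ← pow_mul, mul_comm m 2, ← mul_pow, ← Even.pow_abs (even_two_mul m)]
  gcongr
  rw [bracket_eq, abs_mul, abs_mul, abs_two, abs_of_pos Real.pi_pos]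
  nlinarith [Real.pi_pos]

lemma wtp_le_one_add (m : ℕ) (k : ℤ) : wtp m k ≤ 1 + (2 * Real.pi * k) ^ (2 * m) := by
  rcases eq_or_ne k 0 with rfl | hk
  · simp [wtp_eq_rpow, bracket]
  have hk1 : (1 : ℝ) ≤ |(k : ℝ)| := by exact_mod_cast Int.one_le_abs hk
  have hb : bracket k ≤ |2 * Real.pi * k| := by
    rw [bracket_eq, abs_mul, abs_mul, abs_two, abs_of_pos Real.pi_pos]
    nlinarith [Real.pi_gt_three]
  have hpow := pow_le_pow_left₀ (bracket_pos k).le hb (2 * m)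
  rw [Even.pow_abs (even_two_mul m)] at hpow
  rw [← sq_bracket_pow, ← pow_mul, mul_comm m 2]
  linarith

lemma summable_sq_of_summable_wtp {m : ℕ} {u : ℤ → ℂ}
    (hu : Summable fun k => wtp m k * ‖u k‖ ^ 2) :
    Summable fun k => ‖u k‖ ^ 2 :=
  hu.of_nonneg_of_le (fun k => sq_nonneg _) fun k =>
    le_mul_of_one_le_left (sq_nonneg _)
      (by rw [← sq_bracket_pow]; exact one_le_pow₀ (one_le_pow₀ (one_le_bracket k)))

lemma tsum_wtp_mul_le {m : ℕ} {u : ℤ → ℂ} (hu : Summable fun k => wtp m k * ‖u k‖ ^ 2) :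
    ∑' k, wtp m k * ‖u k‖ ^ 2 ≤
      ∑' k, ‖u k‖ ^ 2 + ∑' k : ℤ, (2 * Real.pi * k) ^ (2 * m) * ‖u k‖ ^ 2 := by
  have hD : Summable fun k : ℤ => (2 * Real.pi * k) ^ (2 * m) * ‖u k‖ ^ 2 :=
    (hu.mul_left (Real.pi ^ (2 * m))).of_nonneg_of_le
      (fun k => mul_nonneg (Even.pow_nonneg (even_two_mul m) _) (sq_nonneg _)) fun k => by
        rw [← mul_assoc]; exact mul_le_mul_of_nonneg_right (two_pi_mul_pow_le m k) (sq_nonneg _)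
  rw [← (summable_sq_of_summable_wtp hu).tsum_add hD]
  exact hu.tsum_le_tsum
    (fun k => by linarith [mul_le_mul_of_nonneg_right (wtp_le_one_add m k) (sq_nonneg ‖u k‖)])
    ((summable_sq_of_summable_wtp hu).add hD)

lemma summable_wtp_mul_norm_sub_sq {s : ℝ} {V V' : ℤ → ℂ}
    (hV : Summable fun k => wtp s k * ‖V k‖ ^ 2) (hV' : Summable fun k => wtp s k * ‖V' k‖ ^ 2) :
    Summable fun k => wtp s k * ‖V' k - V k‖ ^ 2 :=
  ((hV'.add hV).mul_left 2).of_nonneg_of_le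
    (fun k => mul_nonneg (wtp_nonneg s k) (sq_nonneg _)) fun k => by
      have h := (pow_le_pow_left₀ (norm_nonneg _) (norm_sub_le (V' k) (V k)) 2).trans add_sq_le
      linarith [mul_le_mul_of_nonneg_left h (wtp_nonneg s k)]

lemma hmnorm_eq_sqrt (m : ℕ) (W : ℤ → ℂ) :
    hmnorm m W = √(∑' k, wtp (-m) k * ‖W k‖ ^ 2) := by
  rw [hmnorm, Real.sqrt_eq_rpow]

lemma hmnorm_nonneg (m : ℕ) (W : ℤ → ℂ) : 0 ≤ hmnorm m W := by
  rw [hmnorm_eq_sqrt]; exact Real.sqrt_nonneg _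

lemma summable_and_tsum_mul_le_sqrt {ι : Type*} {f g : ι → ℝ} (hf : ∀ i, 0 ≤ f i)
    (hg : ∀ i, 0 ≤ g i) (hf2 : Summable fun i => f i ^ 2) (hg2 : Summable fun i => g i ^ 2) :
    (Summable fun i => f i * g i) ∧
      ∑' i, f i * g i ≤ √(∑' i, f i ^ 2) * √(∑' i, g i ^ 2) := by
  simpa [Real.sqrt_eq_rpow] using
    Real.summable_and_inner_le_Lp_mul_Lq_tsum_of_nonneg .two_two hf hg
      (by simpa using hf2) (by simpa using hg2)

section ConvolutionSums

variable {a b c : ℤ → ℝ}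

lemma hasSum_mul_of_summable (ha : Summable a) (hb : Summable b) :
    HasSum (fun p : ℤ × ℤ => a p.1 * b p.2) ((∑' k, a k) * ∑' k, b k) :=
  ha.hasSum.mul hb.hasSum (summable_mul_of_summable_norm ha.abs hb.abs)

lemma hasSum_comp_sub_mul_fst (ha : Summable a) (hb : Summable b) :
    HasSum (fun p : ℤ × ℤ => a (p.1 - p.2) * b p.1) ((∑' k, a k) * ∑' k, b k) := by
  rw [mul_comm, ← (Equiv.prodShear (Equiv.refl ℤ) Equiv.subLeft).symm.hasSum_iff]
  convert hasSum_mul_of_summable hb ha using 2 with p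
  simp [mul_comm]

lemma hasSum_comp_sub_mul_snd (ha : Summable a) (hb : Summable b) :
    HasSum (fun p : ℤ × ℤ => a (p.1 - p.2) * b p.2) ((∑' k, a k) * ∑' k, b k) := by
  have hneg : Summable fun k => a (-k) := (Equiv.neg ℤ).summable_iff.mpr ha
  rw [← (Equiv.prodComm ℤ ℤ).hasSum_iff]
  convert hasSum_comp_sub_mul_fst hneg hb using 2 with p
  · simp
  · exact ((Equiv.neg ℤ).tsum_eq a).symm

lemma summable_and_tsum_comp_sub_mul_mul_le_l1 (ha0 : ∀ k, 0 ≤ a k) (hb0 : ∀ k, 0 ≤ b k)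
    (ha : Summable a) (hb : Summable fun k => b k ^ 2) :
    (Summable fun p : ℤ × ℤ => a (p.1 - p.2) * b p.2 * b p.1) ∧
      ∑' p : ℤ × ℤ, a (p.1 - p.2) * b p.2 * b p.1 ≤ (∑' k, a k) * ∑' k, b k ^ 2 := by
  have hmaj := ((hasSum_comp_sub_mul_snd ha hb).add (hasSum_comp_sub_mul_fst ha hb)).div_const 2
  have hle : ∀ p : ℤ × ℤ, a (p.1 - p.2) * b p.2 * b p.1 ≤
      (a (p.1 - p.2) * b p.2 ^ 2 + a (p.1 - p.2) * b p.1 ^ 2) / 2 := fun p => by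
    nlinarith [ha0 (p.1 - p.2), mul_nonneg (ha0 (p.1 - p.2)) (sq_nonneg (b p.2 - b p.1))]
  have hsum := hmaj.summable.of_nonneg_of_le
    (fun p => mul_nonneg (mul_nonneg (ha0 _) (hb0 _)) (hb0 _)) hle
  exact ⟨hsum, (hasSum_le hle hsum.hasSum hmaj).trans_eq (by ring)⟩

lemma summable_and_tsum_comp_sub_mul_mul_le_l2 (ha0 : ∀ k, 0 ≤ a k) (hb0 : ∀ k, 0 ≤ b k)
    (hc0 : ∀ k, 0 ≤ c k) (ha : Summable fun k => a k ^ 2) (hb : Summable fun k => b k ^ 2)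
    (hc : Summable c) :
    (Summable fun p : ℤ × ℤ => a (p.1 - p.2) * b p.2 * c p.1) ∧
      ∑' p : ℤ × ℤ, a (p.1 - p.2) * b p.2 * c p.1 ≤
        √(∑' k, a k ^ 2) * √(∑' k, b k ^ 2) * ∑' k, c k := by
  have hx := hasSum_comp_sub_mul_fst ha hc
  have hy : HasSum (fun p : ℤ × ℤ => b p.2 ^ 2 * c p.1) ((∑' k, b k ^ 2) * ∑' k, c k) := by
    convert hasSum_mul_of_summable hc hb using 1
    · ext p; ring
    · ring
  have hsq : ∀ k, √(c k) ^ 2 = c k := fun k => Real.sq_sqrt (hc0 k)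
  have hcs := summable_and_tsum_mul_le_sqrt
    (f := fun p : ℤ × ℤ => a (p.1 - p.2) * √(c p.1)) (g := fun p => b p.2 * √(c p.1))
    (fun p => mul_nonneg (ha0 _) (Real.sqrt_nonneg _))
    (fun p => mul_nonneg (hb0 _) (Real.sqrt_nonneg _))
    (by simpa only [mul_pow, hsq] using hx.summable)
    (by simpa only [mul_pow, hsq] using hy.summable)
  have hprod : ∀ p : ℤ × ℤ, a (p.1 - p.2) * √(c p.1) * (b p.2 * √(c p.1)) =
      a (p.1 - p.2) * b p.2 * c p.1 := fun p => by
    linear_combination (a (p.1 - p.2) * b p.2) * Real.mul_self_sqrt (hc0 p.1)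
  simp only [hprod, mul_pow, hsq] at hcs
  refine ⟨hcs.1, hcs.2.trans_eq ?_⟩
  rw [hx.tsum_eq, hy.tsum_eq, Real.sqrt_mul (tsum_nonneg fun k => sq_nonneg (a k)),
    Real.sqrt_mul (tsum_nonneg fun k => sq_nonneg (b k))]
  linear_combination (√(∑' k, a k ^ 2) * √(∑' k, b k ^ 2)) * Real.mul_self_sqrt (tsum_nonneg hc0)

lemma summable_and_tsum_comp_sub_mul_mul_le_l2_swap (ha0 : ∀ k, 0 ≤ a k)
    (hb0 : ∀ k, 0 ≤ b k) (hc0 : ∀ k, 0 ≤ c k) (ha : Summable fun k => a k ^ 2)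
    (hb : Summable fun k => b k ^ 2) (hc : Summable c) :
    (Summable fun p : ℤ × ℤ => a (p.1 - p.2) * c p.2 * b p.1) ∧
      ∑' p : ℤ × ℤ, a (p.1 - p.2) * c p.2 * b p.1 ≤
        √(∑' k, a k ^ 2) * √(∑' k, b k ^ 2) * ∑' k, c k := by
  have hneg : ∑' k, a (-k) ^ 2 = ∑' k, a k ^ 2 := (Equiv.neg ℤ).tsum_eq fun k => a k ^ 2
  have h := summable_and_tsum_comp_sub_mul_mul_le_l2 (a := fun k => a (-k)) (fun k => ha0 _)
    hb0 hc0 ((Equiv.neg ℤ).summable_iff.mpr ha) hb hc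
  have hswap : (fun p : ℤ × ℤ => a (p.1 - p.2) * c p.2 * b p.1) ∘ Equiv.prodComm ℤ ℤ =
      fun p => a (-(p.1 - p.2)) * b p.2 * c p.1 := by
    ext p; simp only [Function.comp_apply, Equiv.prodComm_apply, Prod.fst_swap, Prod.snd_swap,
      neg_sub]; ring
  rw [← hswap, hneg] at h
  exact ⟨(Equiv.prodComm ℤ ℤ).summable_iff.mp h.1,
    ((Equiv.prodComm ℤ ℤ).tsum_eq _).symm.trans_le h.2⟩

end ConvolutionSums

def convPairingTerm (W u : ℤ → ℂ) (p : ℤ × ℤ) : ℂ := W (p.1 - p.2) * u p.2 * conj (u p.1)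

def convPairing (W u : ℤ → ℂ) : ℂ := ∑' k, conv W u k * conj (u k)

lemma tform_eq (m : ℕ) (W u : ℤ → ℂ) :
    tform m W u = ((∑' k : ℤ, (2 * Real.pi * k) ^ (2 * m) * ‖u k‖ ^ 2 : ℝ) : ℂ) +
      convPairing W u := rfl

lemma norm_convPairingTerm (W u : ℤ → ℂ) (p : ℤ × ℤ) :
    ‖convPairingTerm W u p‖ = ‖W (p.1 - p.2)‖ * ‖u p.2‖ * ‖u p.1‖ := by
  simp [convPairingTerm]

section Pairing

variable {W W₁ W₂ u : ℤ → ℂ}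

lemma convPairing_eq_tsum (h : Summable fun p => ‖convPairingTerm W u p‖) :
    convPairing W u = ∑' p, convPairingTerm W u p := by
  rw [h.of_norm.tsum_prod, convPairing]
  congr 1 with k
  rw [conv, ← tsum_mul_right]
  rfl

lemma norm_convPairing_le (h : Summable fun p => ‖convPairingTerm W u p‖) :
    ‖convPairing W u‖ ≤ ∑' p, ‖convPairingTerm W u p‖ := by
  rw [convPairing_eq_tsum h]
  exact norm_tsum_le_tsum_norm h

lemma convPairing_add (h₁ : Summable fun p => ‖convPairingTerm W₁ u p‖)
    (h₂ : Summable fun p => ‖convPairingTerm W₂ u p‖) :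
    convPairing (W₁ + W₂) u = convPairing W₁ u + convPairing W₂ u := by
  have hadd : ∀ p,
      convPairingTerm (W₁ + W₂) u p = convPairingTerm W₁ u p + convPairingTerm W₂ u p := fun p => by
    simp only [convPairingTerm, Pi.add_apply]; ring
  have h : Summable fun p => ‖convPairingTerm (W₁ + W₂) u p‖ := by
    simpa only [hadd] using (h₁.of_norm.add h₂.of_norm).norm
  simp only [convPairing_eq_tsum h, convPairing_eq_tsum h₁, convPairing_eq_tsum h₂, hadd]
  exact h₁.of_norm.tsum_add h₂.of_norm

end Pairing

section PairingBounds

variable {m : ℕ} {W u : ℤ → ℂ}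

lemma summable_and_tsum_norm_convPairingTerm_le_l1 (hW : Summable fun k => ‖W k‖)
    (hu : Summable fun k => ‖u k‖ ^ 2) :
    (Summable fun p => ‖convPairingTerm W u p‖) ∧
      ∑' p, ‖convPairingTerm W u p‖ ≤ (∑' k, ‖W k‖) * ∑' k, ‖u k‖ ^ 2 := by
  simp only [norm_convPairingTerm]
  exact summable_and_tsum_comp_sub_mul_mul_le_l1 (a := fun k => ‖W k‖) (b := fun k => ‖u k‖)
    (fun _ => norm_nonneg _) (fun _ => norm_nonneg _) hW hu

lemma summable_norm_and_tsum_le (hm : 1 ≤ m) (hu : Summable fun k => wtp m k * ‖u k‖ ^ 2) :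
    (Summable fun k => ‖u k‖) ∧
      ∑' k, ‖u k‖ ≤ √(∑' k, wtp (-m) k) * √(∑' k, wtp m k * ‖u k‖ ^ 2) := by
  have hω : ∀ k, 0 < bracket k ^ m := fun k => pow_pos (bracket_pos k) m
  have hcancel : ∀ k, (bracket k ^ m)⁻¹ * (bracket k ^ m * ‖u k‖) = ‖u k‖ := fun k =>
    inv_mul_cancel_left₀ (hω k).ne' _
  have hsq : ∀ k, (bracket k ^ m * ‖u k‖) ^ 2 = wtp m k * ‖u k‖ ^ 2 := fun k => by
    rw [mul_pow, sq_bracket_pow]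
  simpa only [hcancel, hsq, sq_inv_bracket_pow] using
    summable_and_tsum_mul_le_sqrt (fun k => inv_nonneg.mpr (hω k).le)
      (fun k => mul_nonneg (hω k).le (norm_nonneg (u k)))
      (by simpa only [sq_inv_bracket_pow] using summable_wtp_neg hm)
      (by simpa only [hsq] using hu)

lemma norm_convPairingTerm_le_of_weight {ω : ℤ → ℝ} {C : ℝ} (hω : ∀ k, 0 < ω k)
    (hω_sub : ∀ k j, ω (k - j) ≤ C * (ω j + ω k)) (p : ℤ × ℤ) :
    ‖convPairingTerm W u p‖ ≤
      C * ((ω (p.1 - p.2))⁻¹ * ‖W (p.1 - p.2)‖ * (ω p.2 * ‖u p.2‖) * ‖u p.1‖ +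
        (ω (p.1 - p.2))⁻¹ * ‖W (p.1 - p.2)‖ * ‖u p.2‖ * (ω p.1 * ‖u p.1‖)) := by
  obtain ⟨k, j⟩ := p
  set a := (ω (k - j))⁻¹ * ‖W (k - j)‖
  have hW : ‖W (k - j)‖ = ω (k - j) * a := (mul_inv_cancel_left₀ (hω _).ne' _).symm
  have ha : 0 ≤ a * ‖u j‖ * ‖u k‖ :=
    mul_nonneg (mul_nonneg (mul_nonneg (inv_nonneg.mpr (hω _).le) (norm_nonneg _))
      (norm_nonneg _)) (norm_nonneg _)
  rw [norm_convPairingTerm, hW]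
  calc ω (k - j) * a * ‖u j‖ * ‖u k‖ = ω (k - j) * (a * ‖u j‖ * ‖u k‖) := by ring
    _ ≤ C * (ω j + ω k) * (a * ‖u j‖ * ‖u k‖) := mul_le_mul_of_nonneg_right (hω_sub k j) ha
    _ = _ := by ring

def convConst (m : ℕ) : ℝ := 2 ^ (m + 1) * √(∑' k, wtp (-m) k)

lemma convConst_nonneg (m : ℕ) : 0 ≤ convConst m := by unfold convConst; positivity

lemma summable_and_tsum_norm_convPairingTerm_le (hm : 1 ≤ m)
    (hW : Summable fun k => wtp (-m) k * ‖W k‖ ^ 2)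
    (hu : Summable fun k => wtp m k * ‖u k‖ ^ 2) :
    (Summable fun p => ‖convPairingTerm W u p‖) ∧
      ∑' p, ‖convPairingTerm W u p‖ ≤ convConst m * hmnorm m W * ∑' k, wtp m k * ‖u k‖ ^ 2 := by
  set ω : ℤ → ℝ := fun k => bracket k ^ m
  have hω : ∀ k, 0 < ω k := fun k => pow_pos (bracket_pos k) m
  set a : ℤ → ℝ := fun k => (ω k)⁻¹ * ‖W k‖
  set b : ℤ → ℝ := fun k => ω k * ‖u k‖
  set c : ℤ → ℝ := fun k => ‖u k‖
  have ha0 : ∀ k, 0 ≤ a k := fun k => mul_nonneg (inv_nonneg.mpr (hω k).le) (norm_nonneg _)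
  have hb0 : ∀ k, 0 ≤ b k := fun k => mul_nonneg (hω k).le (norm_nonneg _)
  have hc0 : ∀ k, 0 ≤ c k := fun k => norm_nonneg _
  have ha2 : ∀ k, a k ^ 2 = wtp (-m) k * ‖W k‖ ^ 2 := fun k => by
    rw [mul_pow, sq_inv_bracket_pow]
  have hb2 : ∀ k, b k ^ 2 = wtp m k * ‖u k‖ ^ 2 := fun k => by rw [mul_pow, sq_bracket_pow]
  have ha : Summable fun k => a k ^ 2 := by simpa only [ha2] using hW
  have hb : Summable fun k => b k ^ 2 := by simpa only [hb2] using hu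
  obtain ⟨hc, hc_le⟩ := summable_norm_and_tsum_le hm hu
  obtain ⟨h₁, h₁_le⟩ := summable_and_tsum_comp_sub_mul_mul_le_l2 ha0 hb0 hc0 ha hb hc
  obtain ⟨h₂, h₂_le⟩ := summable_and_tsum_comp_sub_mul_mul_le_l2_swap ha0 hb0 hc0 ha hb hc
  simp only [ha2, hb2, ← hmnorm_eq_sqrt] at h₁_le h₂_le
  have hle : ∀ p, ‖convPairingTerm W u p‖ ≤
      2 ^ m * (a (p.1 - p.2) * b p.2 * c p.1 + a (p.1 - p.2) * c p.2 * b p.1) :=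
    norm_convPairingTerm_le_of_weight hω (bracket_pow_sub_le m)
  have hmaj := (h₁.add h₂).mul_left (2 ^ m)
  refine ⟨hmaj.of_nonneg_of_le (fun _ => norm_nonneg _) hle, ?_⟩
  set N := ∑' k, wtp m k * ‖u k‖ ^ 2
  calc ∑' p, ‖convPairingTerm W u p‖
      ≤ 2 ^ m * ((∑' p : ℤ × ℤ, a (p.1 - p.2) * b p.2 * c p.1) +
          ∑' p : ℤ × ℤ, a (p.1 - p.2) * c p.2 * b p.1) := by
        rw [← h₁.tsum_add h₂, ← tsum_mul_left]
        exact (hmaj.of_nonneg_of_le (fun _ => norm_nonneg _) hle).tsum_le_tsum hle hmaj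
    _ ≤ 2 ^ m * (2 * (hmnorm m W * √N * (√(∑' k, wtp (-m) k) * √N))) := by
        have := mul_le_mul_of_nonneg_left hc_le
          (mul_nonneg (hmnorm_nonneg m W) (Real.sqrt_nonneg N))
        gcongr
        linarith
    _ = convConst m * hmnorm m W * N := by
        rw [convConst]
        linear_combination (2 ^ (m + 1) * √(∑' k, wtp (-m) k) * hmnorm m W) *
          Real.mul_self_sqrt (tsum_nonneg fun k => mul_nonneg (wtp_nonneg _ k) (sq_nonneg ‖u k‖))

end PairingBounds

lemma norm_tform_sub_le {m : ℕ} (hm : 1 ≤ m) {V V' u : ℤ → ℂ}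
    (hV : Summable fun k => wtp (-m) k * ‖V k‖ ^ 2)
    (hV' : Summable fun k => wtp (-m) k * ‖V' k‖ ^ 2)
    (hu : Summable fun k => wtp m k * ‖u k‖ ^ 2) :
    ‖tform m V' u - tform m V u‖ ≤
      convConst m * hmnorm m (fun k => V' k - V k) * ∑' k, wtp m k * ‖u k‖ ^ 2 := by
  obtain ⟨hW, hW_le⟩ :=
    summable_and_tsum_norm_convPairingTerm_le hm (summable_wtp_mul_norm_sub_sq hV hV') hu
  have hadd := convPairing_add hW (summable_and_tsum_norm_convPairingTerm_le hm hV hu).1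
  rw [show (fun k => V' k - V k) + V = V' by ext k; simp] at hadd
  rw [tform_eq, tform_eq, add_sub_add_left_eq_sub, hadd, add_sub_cancel_right]
  exact (norm_convPairing_le hW).trans hW_le

lemma tendsto_hmnorm_indicator_compl (m : ℕ) (V : ℤ → ℂ) :
    Tendsto (fun T : Finset ℤ => hmnorm m ((↑T : Set ℤ)ᶜ.indicator V)) atTop (nhds 0) := by
  have h := (tendsto_tsum_compl_atTop_zero fun k => wtp (-m) k * ‖V k‖ ^ 2).rpow_const
    (p := 1 / 2) (Or.inr (by norm_num))
  rw [Real.zero_rpow (by norm_num)] at h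
  refine h.congr fun T => ?_
  rw [hmnorm]
  congr 1
  calc ∑' k : {k // k ∉ T}, wtp (-m) k * ‖V k‖ ^ 2
      = ∑' k, (↑T : Set ℤ)ᶜ.indicator (fun k => wtp (-m) k * ‖V k‖ ^ 2) k :=
        tsum_subtype (↑T : Set ℤ)ᶜ fun k => wtp (-m) k * ‖V k‖ ^ 2
    _ = _ := tsum_congr fun k => by by_cases hk : k ∈ T <;> simp [hk]

lemma exists_garding {m : ℕ} (hm : 1 ≤ m) {V : ℤ → ℂ}
    (hV : Summable fun k => wtp (-m) k * ‖V k‖ ^ 2) :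
    ∃ K, 0 ≤ K ∧ ∀ u : ℤ → ℂ, (Summable fun k => wtp m k * ‖u k‖ ^ 2) →
      ∑' k, wtp m k * ‖u k‖ ^ 2 ≤ 2 * (tform m V u).re + K * ∑' k, ‖u k‖ ^ 2 := by
  obtain ⟨T, hT⟩ := (((tendsto_hmnorm_indicator_compl m V).const_mul (convConst m)).eventually
    (gt_mem_nhds (show convConst m * 0 < 1 / 2 by norm_num))).exists
  set V₀ := (↑T : Set ℤ).indicator V
  set V₁ := (↑T : Set ℤ)ᶜ.indicator V
  have hV₀ : Summable fun k => ‖V₀ k‖ :=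
    summable_of_ne_finset_zero (s := T) fun k hk => by simp [V₀, hk]
  have hV₁ : Summable fun k => wtp (-m) k * ‖V₁ k‖ ^ 2 :=
    hV.of_nonneg_of_le (fun k => mul_nonneg (wtp_nonneg _ k) (sq_nonneg _)) fun k => by
      gcongr
      · exact wtp_nonneg _ k
      · exact norm_indicator_le_norm_self _ _
  refine ⟨2 * ∑' k, ‖V₀ k‖ + 2, by positivity, fun u hu => ?_⟩
  obtain ⟨h₀, h₀_le⟩ :=
    summable_and_tsum_norm_convPairingTerm_le_l1 hV₀ (summable_sq_of_summable_wtp hu)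
  obtain ⟨h₁, h₁_le⟩ := summable_and_tsum_norm_convPairingTerm_le hm hV₁ hu
  have hN : 0 ≤ ∑' k, wtp m k * ‖u k‖ ^ 2 :=
    tsum_nonneg fun k => mul_nonneg (wtp_nonneg _ k) (sq_nonneg _)
  have hadd := convPairing_add h₀ h₁
  rw [Set.indicator_self_add_compl] at hadd
  have hP : ‖convPairing V u‖ ≤
      (∑' k, ‖V₀ k‖) * ∑' k, ‖u k‖ ^ 2 + 1 / 2 * ∑' k, wtp m k * ‖u k‖ ^ 2 := by
    rw [hadd]
    refine (norm_add_le _ _).trans (add_le_add ((norm_convPairing_le h₀).trans h₀_le)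
      ((norm_convPairing_le h₁).trans (h₁_le.trans ?_)))
    exact mul_le_mul_of_nonneg_right hT.le hN
  have hre : (tform m V u).re =
      ∑' k : ℤ, (2 * Real.pi * k) ^ (2 * m) * ‖u k‖ ^ 2 + (convPairing V u).re := by
    simp [tform_eq]
  have hA : 0 ≤ ∑' k, ‖u k‖ ^ 2 := tsum_nonneg fun k => sq_nonneg _
  linarith [tsum_wtp_mul_le hu, neg_abs_le (convPairing V u).re,
    Complex.abs_re_le_norm (convPairing V u)]

end HPlus

open HPlus in
theorem form_convergence (m : ℕ) (hm : 1 ≤ m) (V : ℤ → ℂ) (Vn : ℕ → ℤ → ℂ)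
    (hV : Summable fun k : ℤ => wtp (-(m : ℝ)) k * ‖V k‖ ^ 2)
    (hVn : ∀ n, Summable fun k : ℤ => wtp (-(m : ℝ)) k * ‖Vn n k‖ ^ 2)
    (hconv : Tendsto (fun n => hmnorm m (fun k => Vn n k - V k)) atTop (nhds 0)) :
    ∃ a b : ℕ → ℝ, (∀ n, 0 ≤ a n) ∧ (∀ n, 0 ≤ b n) ∧
      Tendsto a atTop (nhds 0) ∧ Tendsto b atTop (nhds 0) ∧
      ∀ n, ∀ u : ℤ → ℂ, (Summable fun k : ℤ => wtp (m : ℝ) k * ‖u k‖ ^ 2) →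
        ‖tform m (Vn n) u - tform m V u‖ ≤
          a n * (∑' k : ℤ, ‖u k‖ ^ 2) + b n * (tform m V u).re := by
  obtain ⟨K, hK, hgarding⟩ := exists_garding hm hV
  have hC := convConst_nonneg m
  refine ⟨fun n => K * convConst m * hmnorm m (fun k => Vn n k - V k),
    fun n => 2 * convConst m * hmnorm m (fun k => Vn n k - V k),
    fun n => by have := hmnorm_nonneg m (fun k => Vn n k - V k); positivity,
    fun n => by have := hmnorm_nonneg m (fun k => Vn n k - V k); positivity,
    by simpa using hconv.const_mul (K * convConst m),
    by simpa using hconv.const_mul (2 * convConst m), fun n u hu => ?_⟩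
  calc ‖tform m (Vn n) u - tform m V u‖
      ≤ convConst m * hmnorm m (fun k => Vn n k - V k) * ∑' k, wtp m k * ‖u k‖ ^ 2 :=
        norm_tform_sub_le hm hV (hVn n) hu
    _ ≤ convConst m * hmnorm m (fun k => Vn n k - V k) *
          (2 * (tform m V u).re + K * ∑' k, ‖u k‖ ^ 2) :=
        mul_le_mul_of_nonneg_left (hgarding u hu)
          (mul_nonneg hC (hmnorm_nonneg m _))
    _ = _ := by ring
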